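/- arXiv:1911.01760 — 4 statements merged into one kernel-verified Lean document; each statement's English description precedes it below -/
import Mathlib

section
/- Let (X,ρ) be an unbounded K-quasimetric space and a ∈ X. Then the sphericalization ρ_a is a 4K²-quasimetric on the one-point extension Ẋ = X ∪ {∞}; that is, ρ_a is symmetric, vanishes exactly on the diagonal, and ρ_a(x,z) ≤ 4K²·max(ρ_a(x,y), ρ_a(y,z)) for all x,y,z ∈ Ẋ. -/
open Set MeasureTheory
open scoped ENNReal NNReal

universe u

namespace SphFlat

/-- A `K`-quasimetric on a set `X`: symmetric, vanishing exactly on the diagonal, and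
satisfying the `K`-relaxed (max-type) triangle inequality. -/
def IsQuasiMetric {X : Type*} (K : ℝ) (ρ : X → X → ℝ) : Prop :=
  1 ≤ K ∧ (∀ x y, 0 ≤ ρ x y) ∧ (∀ x y, ρ x y = ρ y x) ∧
    (∀ x y, ρ x y = 0 ↔ x = y) ∧ ∀ x y z, ρ x z ≤ K * max (ρ x y) (ρ y z)

/-- The quasimetric ball `B(x,r)`. -/
def qball {X : Type*} (ρ : X → X → ℝ) (x : X) (r : ℝ) : Set X := {y | ρ x y < r}

/-- The diameter of a quasimetric space, as an extended nonnegative real. -/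
noncomputable def qdiam {X : Type*} (ρ : X → X → ℝ) : ℝ≥0∞ :=
  ⨆ (x : X) (y : X), ENNReal.ofReal (ρ x y)

/-- A quasimetric space is bounded if the quasimetric is bounded above. -/
def QBounded {X : Type*} (ρ : X → X → ℝ) : Prop := ∃ M : ℝ, ∀ x y, ρ x y ≤ M

/-- `τ`-uniform perfectness: whenever `X \ B(x,r)` is nonempty, so is `B(x,r) \ B(x,τr)`. -/
def UniformlyPerfectWith {X : Type*} (ρ : X → X → ℝ) (τ : ℝ) : Prop :=
  ∀ (x : X) (r : ℝ), 0 < r → (Set.univ \ qball ρ x r).Nonempty →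
    (qball ρ x r \ qball ρ x (τ * r)).Nonempty

/-- Uniform perfectness (for some `τ ∈ (0,1)`). -/
def QUniformlyPerfect {X : Type*} (ρ : X → X → ℝ) : Prop :=
  ∃ τ : ℝ, τ ∈ Set.Ioo (0 : ℝ) 1 ∧ UniformlyPerfectWith ρ τ

/-- Metric doubling: there is `N` such that every ball of radius `r` is covered by at most
`N` balls of radius `r/2`. -/
def QDoubling {X : Type*} (ρ : X → X → ℝ) : Prop :=
  ∃ N : ℕ, ∀ (x : X) (r : ℝ), ∃ s : Finset X, s.card ≤ N ∧
    qball ρ x r ⊆ ⋃ y ∈ s, qball ρ y (r / 2)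

/-- The cross ratio `r(a,b,c,d) = ρ(a,c)ρ(b,d) / (ρ(a,b)ρ(c,d))`. -/
noncomputable def crossRatio {X : Type*} (ρ : X → X → ℝ) (a b c d : X) : ℝ :=
  ρ a c * ρ b d / (ρ a b * ρ c d)

/-- `θ` is a homeomorphism from `[0,∞)` onto `[0,∞)`. -/
def ControlHomeo (θ : ℝ → ℝ) : Prop :=
  θ 0 = 0 ∧ StrictMonoOn θ (Set.Ici 0) ∧ ContinuousOn θ (Set.Ici 0) ∧
    Set.SurjOn θ (Set.Ici 0) (Set.Ici 0)

/-- `f` is `θ`-quasimöbius: for every quadruple of distinct points,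
`r(a,b,c,d) ≤ t` implies `r(f a, f b, f c, f d) ≤ θ t`. -/
noncomputable def QuasiMobius {X Y : Type*} (ρ : X → X → ℝ) (σ : Y → Y → ℝ)
    (f : X → Y) (θ : ℝ → ℝ) : Prop :=
  ∀ a b c d : X, a ≠ b → a ≠ c → a ≠ d → b ≠ c → b ≠ d → c ≠ d →
    ∀ t : ℝ, crossRatio ρ a b c d ≤ t → crossRatio σ (f a) (f b) (f c) (f d) ≤ θ t

/-- `f` is `(h,H)`-weakly quasimöbius. -/
noncomputable def WeaklyQuasiMobius {X Y : Type*} (ρ : X → X → ℝ) (σ : Y → Y → ℝ)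
    (f : X → Y) (h H : ℝ) : Prop :=
  ∀ a b c d : X, a ≠ b → a ≠ c → a ≠ d → b ≠ c → b ≠ d → c ≠ d →
    crossRatio ρ a b c d ≤ h → crossRatio σ (f a) (f b) (f c) (f d) ≤ H

/-- `f` is `η`-quasisymmetric. -/
def QuasiSymmetric {X Y : Type*} (ρ : X → X → ℝ) (σ : Y → Y → ℝ)
    (f : X → Y) (η : ℝ → ℝ) : Prop :=
  ∀ (x a b : X) (t : ℝ), 0 < t → ρ x a ≤ t * ρ x b → σ (f x) (f a) ≤ η t * σ (f x) (f b)

/-- `μ` is a doubling measure with constant `C` on the quasimetric space `(X,ρ)`: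
`0 < μ(B(x,2r)) ≤ C μ(B(x,r)) < ∞` for all balls. -/
def QDoublingMeasure {X : Type*} [MeasurableSpace X] (ρ : X → X → ℝ)
    (μ : Measure X) (C : ℝ) : Prop :=
  ∀ (x : X) (r : ℝ), 0 < r → 0 < μ (qball ρ x r) ∧ μ (qball ρ x (2 * r)) < ⊤ ∧
    μ (qball ρ x (2 * r)) ≤ ENNReal.ofReal C * μ (qball ρ x r)

/-- Ahlfors `Q`-regularity with constant `C` of a set function `m` on the quasimetric
space `(X,ρ)`: `C⁻¹ R^Q ≤ m(B(x,R)) ≤ C R^Q` for `0 < R < diam X`. -/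
def QAhlfors {X : Type*} (ρ : X → X → ℝ) (m : Set X → ℝ≥0∞) (Q C : ℝ) : Prop :=
  ∀ (x : X) (r : ℝ), 0 < r → ENNReal.ofReal r < qdiam ρ →
    ENNReal.ofReal (C⁻¹ * r ^ Q) ≤ m (qball ρ x r) ∧ m (qball ρ x r) ≤ ENNReal.ofReal (C * r ^ Q)

/-- The sphericalization `ρ_a` of `ρ` with respect to the base point `a`, on the one-point
extension `Ẋ = X ∪ {∞}` (modelled as `Option X`, with `none = ∞`). -/
noncomputable def spher {X : Type*} (ρ : X → X → ℝ) (a : X) : Option X → Option X → ℝ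
  | some x, some y => ρ x y / ((1 + ρ x a) * (1 + ρ y a))
  | some x, none => 1 / (1 + ρ x a)
  | none, some y => 1 / (1 + ρ y a)
  | none, none => 0

/-- The flattening `ρ^c` of `ρ` with respect to `c`, on `X^c = X \ {c}`. -/
noncomputable def flat {X : Type*} (ρ : X → X → ℝ) (c : X) (x y : {z : X // z ≠ c}) : ℝ :=
  ρ x.1 y.1 / (ρ x.1 c * ρ y.1 c)

private lemma arith (K u v w p q r : ℝ) (hK : 1 ≤ K)
    (hu : 0 ≤ u) (hv : 0 ≤ v) (hw : 0 ≤ w) (hp : 1 ≤ p) (hq : 1 ≤ q) (hr : 1 ≤ r)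
    (h1 : w ≤ K * max u v) (h2 : w ≤ K * max p r)
    (h3 : q ≤ 2 * K * max v r) (h4 : q ≤ 2 * K * max u p) :
    w * q ≤ 4 * K ^ 2 * max (u * r) (v * p) := by
  have hmr : v * p ≤ max (u * r) (v * p) := le_max_right _ _
  have hml : u * r ≤ max (u * r) (v * p) := le_max_left _ _
  have hK2 : (0:ℝ) ≤ K ^ 2 := sq_nonneg K
  rcases le_total u v with huv | huv
  · rw [max_eq_right huv] at h1
    rcases le_total u p with hup | hup
    · rw [max_eq_right hup] at h4
      -- w ≤ K v, q ≤ 2 K p : w q ≤ 2 K² v p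
      have := mul_le_mul h1 h4 (by linarith) (by positivity)
      nlinarith [mul_nonneg hv (by linarith : (0:ℝ) ≤ p),
        mul_nonneg hK2 (sub_nonneg.2 hmr)]
    · rw [max_eq_left hup] at h4
      rcases le_total p r with hpr | hpr
      · rw [max_eq_right hpr] at h2
        -- w ≤ K r, q ≤ 2 K u ≤ 2 K v : w q ≤ 2 K² u r
        have := mul_le_mul h2 h4 (by linarith) (by positivity)
        nlinarith [mul_nonneg hu (by linarith : (0:ℝ) ≤ r),
          mul_nonneg hK2 (sub_nonneg.2 hml)]
      · rw [max_eq_left hpr] at h2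
        -- w ≤ K p, q ≤ 2 K u ≤ 2 K v : w q ≤ 2 K² u p ≤ 2 K² v p
        have := mul_le_mul h2 h4 (by linarith) (by positivity)
        nlinarith [mul_nonneg hu (by linarith : (0:ℝ) ≤ p),
          mul_nonneg hK2 (sub_nonneg.2 hmr),
          mul_nonneg hK2 (mul_nonneg (sub_nonneg.2 huv) (by linarith : (0:ℝ) ≤ p))]
  · rw [max_eq_left huv] at h1
    rcases le_total v r with hvr | hvr
    · rw [max_eq_right hvr] at h3
      -- w ≤ K u, q ≤ 2 K r : w q ≤ 2 K² u r
      have := mul_le_mul h1 h3 (by linarith) (by positivity)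
      nlinarith [mul_nonneg hu (by linarith : (0:ℝ) ≤ r),
        mul_nonneg hK2 (sub_nonneg.2 hml)]
    · rw [max_eq_left hvr] at h3
      rcases le_total p r with hpr | hpr
      · rw [max_eq_right hpr] at h2
        -- w ≤ K r, q ≤ 2 K v ≤ 2 K u : w q ≤ 2 K² v r ≤ 2 K² u r
        have := mul_le_mul h2 h3 (by linarith) (by positivity)
        nlinarith [mul_nonneg hv (by linarith : (0:ℝ) ≤ r),
          mul_nonneg hK2 (sub_nonneg.2 hml),
          mul_nonneg hK2 (mul_nonneg (sub_nonneg.2 huv) (by linarith : (0:ℝ) ≤ r))]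
      · rw [max_eq_left hpr] at h2
        -- w ≤ K p, q ≤ 2 K v : w q ≤ 2 K² v p
        have := mul_le_mul h2 h3 (by linarith) (by positivity)
        nlinarith [mul_nonneg hv (by linarith : (0:ℝ) ≤ p),
          mul_nonneg hK2 (sub_nonneg.2 hmr)]
private lemma step (K A B C D : ℝ) (hB : 0 < B) (hD : 0 < D)
    (h : A * D ≤ 4 * K ^ 2 * (C * B)) : A / B ≤ 4 * K ^ 2 * (C / D) := by
  rw [← mul_div_assoc, div_le_div_iff₀ hB hD]
  calc A * D ≤ 4 * K ^ 2 * (C * B) := h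
    _ = 4 * K ^ 2 * C * B := by ring

/-- the sphericalization of an unbounded `K`-quasimetric space with respect to a
base point `a` is a `4K²`-quasimetric on the one-point extension `Ẋ = X ∪ {∞}`. -/
theorem statement_3 {X : Type*} (K : ℝ) (ρ : X → X → ℝ)
    (hρ : IsQuasiMetric K ρ) (hub : ¬ QBounded ρ) (a : X) :
    IsQuasiMetric (4 * K ^ 2) (spher ρ a) := by
  obtain ⟨hK, hnn, hsym, hzero, htri⟩ := hρ
  have hK0 : (0:ℝ) < K := lt_of_lt_of_le one_pos hK
  have hK4 : (1:ℝ) ≤ 4 * K ^ 2 := by nlinarith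
  have hd : ∀ x : X, (0:ℝ) < 1 + ρ x a := fun x => by linarith [hnn x a]
  refine ⟨hK4, ?_, ?_, ?_, ?_⟩
  · rintro (_ | x) (_ | y)
    · simp [spher]
    · exact le_of_lt (by simpa [spher] using one_div_pos.2 (hd y))
    · exact le_of_lt (by simpa [spher] using one_div_pos.2 (hd x))
    · exact div_nonneg (hnn x y) (le_of_lt (mul_pos (hd x) (hd y)))
  · rintro (_ | x) (_ | y) <;> simp only [spher]
    rw [hsym x y]; ring
  · rintro (_ | x) (_ | y)
    · simp [spher]
    · simp only [spher]
      constructor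
      · intro h; exact absurd h (ne_of_gt (one_div_pos.2 (hd y)))
      · intro h; exact absurd h (by simp)
    · simp only [spher]
      constructor
      · intro h; exact absurd h (ne_of_gt (one_div_pos.2 (hd x)))
      · intro h; exact absurd h (by simp)
    · simp only [spher, Option.some_inj]
      rw [div_eq_zero_iff]
      constructor
      · rintro (h | h)
        · exact (hzero x y).1 h
        · exact absurd h (ne_of_gt (mul_pos (hd x) (hd y)))
      · intro h; exact Or.inl ((hzero x y).2 h)
  · -- triangle inequality
    have key : ∀ y z : X, 1 + ρ y a ≤ 2 * K * max (ρ y z) (1 + ρ z a) := by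
      intro y z
      have h1 : ρ y a ≤ K * max (ρ y z) (ρ z a) := htri y z a
      have h2 : max (ρ y z) (ρ z a) ≤ max (ρ y z) (1 + ρ z a) :=
        max_le_max le_rfl (by linarith)
      have h3 : (1:ℝ) ≤ max (ρ y z) (1 + ρ z a) :=
        le_trans (by linarith [hnn z a]) (le_max_right _ _)
      nlinarith [le_trans h1 (mul_le_mul_of_nonneg_left h2 hK0.le)]
    rintro (_ | x) (_ | y) (_ | z)
    · simp [spher]
    · -- ∞ ∞ z
      simp only [spher]
      have h1 : 0 ≤ 1 / (1 + ρ z a) := le_of_lt (one_div_pos.2 (hd z))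
      calc 1 / (1 + ρ z a) ≤ 4 * K ^ 2 * (1 / (1 + ρ z a)) := by nlinarith
        _ ≤ 4 * K ^ 2 * max 0 (1 / (1 + ρ z a)) := by
            apply mul_le_mul_of_nonneg_left (le_max_right _ _) (by positivity)
    · -- ∞ y ∞
      simp only [spher]
      exact mul_nonneg (by positivity)
        (le_trans (one_div_pos.2 (hd y)).le (le_max_left _ _))
    · -- ∞ y z
      simp only [spher]
      have hq := key y z
      have hqy := hd y; have hqz := hd z
      rcases le_total (ρ y z) (1 + ρ z a) with hm | hm
      · rw [max_eq_right hm] at hq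
        calc 1 / (1 + ρ z a) ≤ 4 * K ^ 2 * (1 / (1 + ρ y a)) := by
              apply step K _ _ _ _ hqz hqy
              nlinarith [mul_nonneg (mul_nonneg hK0.le (sub_nonneg.2 hK)) hqz.le,
                mul_nonneg hK0.le hqz.le]
          _ ≤ _ := mul_le_mul_of_nonneg_left (le_max_left _ _) (by positivity)
      · rw [max_eq_left hm] at hq
        calc 1 / (1 + ρ z a) ≤ 4 * K ^ 2 * (ρ y z / ((1 + ρ y a) * (1 + ρ z a))) := by
              apply step K _ _ _ _ hqz (mul_pos hqy hqz)
              -- need (1+ρya)(1+ρza) ≤ 4K² (ρyz (1+ρza))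
              nlinarith [mul_le_mul_of_nonneg_right hq hqz.le,
                mul_nonneg (mul_nonneg (mul_nonneg hK0.le (sub_nonneg.2 hK)) (hnn y z)) hqz.le,
                mul_nonneg (mul_nonneg hK0.le (hnn y z)) hqz.le]
          _ ≤ _ := mul_le_mul_of_nonneg_left (le_max_right _ _) (by positivity)
    · -- x ∞ ∞
      simp only [spher]
      have h1 : 0 ≤ 1 / (1 + ρ x a) := le_of_lt (one_div_pos.2 (hd x))
      calc 1 / (1 + ρ x a) ≤ 4 * K ^ 2 * (1 / (1 + ρ x a)) := by nlinarith
        _ ≤ 4 * K ^ 2 * max (1 / (1 + ρ x a)) 0 := by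
            apply mul_le_mul_of_nonneg_left (le_max_left _ _) (by positivity)
    · -- x ∞ z
      simp only [spher]
      have hw : ρ x z ≤ K * max (ρ x a) (ρ z a) := by
        have := htri x a z
        rwa [hsym a z] at this
      have hx0 := hd x; have hz0 := hd z
      rcases le_total (ρ x a) (ρ z a) with hm | hm
      · rw [max_eq_right hm] at hw
        calc ρ x z / ((1 + ρ x a) * (1 + ρ z a)) ≤ 4 * K ^ 2 * (1 / (1 + ρ x a)) := by
              apply step K _ _ _ _ (mul_pos hx0 hz0) hx0
              -- ρxz (1+ρxa) ≤ 4K² (1+ρxa)(1+ρza), with ρxz ≤ K ρza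
              nlinarith [mul_le_mul_of_nonneg_right hw hx0.le,
                mul_nonneg (mul_nonneg hK0.le (sub_nonneg.2 hK)) (mul_nonneg hx0.le hz0.le),
                mul_nonneg hK0.le (mul_nonneg hx0.le hz0.le),
                mul_nonneg (mul_nonneg hK0.le (hnn z a)) hx0.le]
          _ ≤ _ := mul_le_mul_of_nonneg_left (le_max_left _ _) (by positivity)
      · rw [max_eq_left hm] at hw
        calc ρ x z / ((1 + ρ x a) * (1 + ρ z a)) ≤ 4 * K ^ 2 * (1 / (1 + ρ z a)) := by
              apply step K _ _ _ _ (mul_pos hx0 hz0) hz0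
              nlinarith [mul_le_mul_of_nonneg_right hw hz0.le,
                mul_nonneg (mul_nonneg hK0.le (sub_nonneg.2 hK)) (mul_nonneg hx0.le hz0.le),
                mul_nonneg hK0.le (mul_nonneg hx0.le hz0.le),
                mul_nonneg (mul_nonneg hK0.le (hnn x a)) hz0.le]
          _ ≤ _ := mul_le_mul_of_nonneg_left (le_max_right _ _) (by positivity)
    · -- x y ∞
      simp only [spher]
      have hq : 1 + ρ y a ≤ 2 * K * max (ρ x y) (1 + ρ x a) := by
        have := key y x
        rwa [hsym y x] at this
      have hqx := hd x; have hqy := hd y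
      rcases le_total (ρ x y) (1 + ρ x a) with hm | hm
      · rw [max_eq_right hm] at hq
        calc 1 / (1 + ρ x a) ≤ 4 * K ^ 2 * (1 / (1 + ρ y a)) := by
              apply step K _ _ _ _ hqx hqy
              nlinarith [mul_nonneg (mul_nonneg hK0.le (sub_nonneg.2 hK)) hqx.le,
                mul_nonneg hK0.le hqx.le]
          _ ≤ _ := mul_le_mul_of_nonneg_left (le_max_right _ _) (by positivity)
      · rw [max_eq_left hm] at hq
        calc 1 / (1 + ρ x a) ≤ 4 * K ^ 2 * (ρ x y / ((1 + ρ x a) * (1 + ρ y a))) := by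
              apply step K _ _ _ _ hqx (mul_pos hqx hqy)
              nlinarith [mul_le_mul_of_nonneg_right hq hqx.le,
                mul_nonneg (mul_nonneg (mul_nonneg hK0.le (sub_nonneg.2 hK)) (hnn x y)) hqx.le,
                mul_nonneg (mul_nonneg hK0.le (hnn x y)) hqx.le]
          _ ≤ _ := mul_le_mul_of_nonneg_left (le_max_left _ _) (by positivity)
    · -- main case: x y z all finite
      simp only [spher]
      have hp0 := hd x; have hq0 := hd y; have hr0 := hd z
      have hp1 : (1:ℝ) ≤ 1 + ρ x a := by linarith [hnn x a]
      have hq1 : (1:ℝ) ≤ 1 + ρ y a := by linarith [hnn y a]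
      have hr1 : (1:ℝ) ≤ 1 + ρ z a := by linarith [hnn z a]
      have h1 : ρ x z ≤ K * max (ρ x y) (ρ y z) := htri x y z
      have h2 : ρ x z ≤ K * max (1 + ρ x a) (1 + ρ z a) := by
        have h := htri x a z
        rw [hsym a z] at h
        have hmm : max (ρ x a) (ρ z a) ≤ max (1 + ρ x a) (1 + ρ z a) :=
          max_le_max (by linarith) (by linarith)
        exact le_trans h (mul_le_mul_of_nonneg_left hmm hK0.le)
      have h3 : 1 + ρ y a ≤ 2 * K * max (ρ y z) (1 + ρ z a) := key y z
      have h4 : 1 + ρ y a ≤ 2 * K * max (ρ x y) (1 + ρ x a) := by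
        have := key y x
        rwa [hsym y x] at this
      have main := arith K (ρ x y) (ρ y z) (ρ x z) (1 + ρ x a) (1 + ρ y a) (1 + ρ z a)
        hK (hnn x y) (hnn y z) (hnn x z) hp1 hq1 hr1 h1 h2 h3 h4
      rcases max_cases (ρ x y * (1 + ρ z a)) (ρ y z * (1 + ρ x a)) with ⟨hmx, _⟩ | ⟨hmx, _⟩ <;>
        rw [hmx] at main
      · calc ρ x z / ((1 + ρ x a) * (1 + ρ z a))
            ≤ 4 * K ^ 2 * (ρ x y / ((1 + ρ x a) * (1 + ρ y a))) := by
              apply step K _ _ _ _ (mul_pos hp0 hr0) (mul_pos hp0 hq0)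
              nlinarith [mul_le_mul_of_nonneg_right main hp0.le]
          _ ≤ _ := mul_le_mul_of_nonneg_left (le_max_left _ _) (by positivity)
      · calc ρ x z / ((1 + ρ x a) * (1 + ρ z a))
            ≤ 4 * K ^ 2 * (ρ y z / ((1 + ρ y a) * (1 + ρ z a))) := by
              apply step K _ _ _ _ (mul_pos hp0 hr0) (mul_pos hq0 hr0)
              nlinarith [mul_le_mul_of_nonneg_right main hr0.le]
          _ ≤ _ := mul_le_mul_of_nonneg_left (le_max_right _ _) (by positivity)

end SphFlat
end

section
/- Let (X,ρ) be a bounded K-quasimetric space and c ∈ X. Then the flattening ρ^c is a K²-quasimetric on X^c = X \ {c}; that is, ρ^c is symmetric, vanishes exactly on the diagonal, and ρ^c(x,z) ≤ K²·max(ρ^c(x,y), ρ^c(y,z)) for all x,y,z ∈ X^c. -/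
open Set MeasureTheory
open scoped ENNReal NNReal

universe u

namespace SphFlat

private lemma key {K a b e p q r : ℝ} (hK : 1 ≤ K)
    (ha : 0 ≤ a) (hb : 0 ≤ b) (hp : 0 ≤ p) (hr : 0 ≤ r) (he : 0 ≤ e) (hq : 0 ≤ q)
    (h1 : e ≤ K * max a b) (h2 : e ≤ K * max p r)
    (h3 : q ≤ K * max a p) (h4 : q ≤ K * max b r) :
    e * q ≤ K ^ 2 * max (a * r) (b * p) := by
  have hK0 : 0 ≤ K := le_trans zero_le_one hK
  have hmax1 := le_max_left (a * r) (b * p)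
  have hmax2 := le_max_right (a * r) (b * p)
  have step : ∀ u v : ℝ, e ≤ K * u → q ≤ K * v → 0 ≤ u → 0 ≤ v →
      u * v ≤ max (a * r) (b * p) → e * q ≤ K ^ 2 * max (a * r) (b * p) := by
    intro u v he1 hq1 hu hv huv
    nlinarith [mul_le_mul he1 hq1 hq (mul_nonneg hK0 hu), mul_nonneg hK0 hK0]
  rcases le_total b a with h5 | h5 <;> rcases le_total p r with h6 | h6 <;>
    rcases le_total a p with h7 | h7 <;> rcases le_total b r with h8 | h8 <;>
    simp only [max_eq_left, max_eq_right, h5, h6, h7, h8] at h1 h2 h3 h4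
  · exact step _ _ h1 h4 ha hr hmax1
  · exact step _ _ h1 h3 ha hp (le_trans (by nlinarith) hmax1)
  · exact step _ _ h1 h4 ha hr hmax1
  · exact step _ _ h2 h4 hr hb (le_trans (by nlinarith) hmax1)
  · exact step _ _ h1 h4 ha hr hmax1
  · exact step _ _ h2 h4 hp hb (le_trans (by nlinarith) hmax2)
  · exact step _ _ h1 h4 ha hr hmax1
  · exact step _ _ h2 h4 hp hb (le_trans (by nlinarith) hmax2)
  · exact step _ _ h1 h3 hb hp hmax2
  · exact step _ _ h1 h3 hb hp hmax2
  · exact step _ _ h2 h3 hr ha (le_trans (by nlinarith) hmax1)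
  · exact step _ _ h2 h3 hr ha (le_trans (by nlinarith) hmax1)
  · exact step _ _ h1 h3 hb hp hmax2
  · exact step _ _ h1 h3 hb hp hmax2
  · exact step _ _ h2 h3 hp ha (le_trans (by nlinarith) hmax2)
  · exact step _ _ h2 h3 hp ha (le_trans (by nlinarith) hmax2)


/-- the flattening of a bounded `K`-quasimetric space with respect to `c ∈ X`
is a `K²`-quasimetric on `X^c = X \ {c}`. -/
theorem statement_4 {X : Type*} (K : ℝ) (ρ : X → X → ℝ)
    (hρ : IsQuasiMetric K ρ) (hb : QBounded ρ) (c : X) :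
    IsQuasiMetric (K ^ 2) (flat ρ c) := by
  obtain ⟨hK, hnn, hsym, hzero, htri⟩ := hρ
  have hpos : ∀ x : {z : X // z ≠ c}, 0 < ρ x.1 c := fun x =>
    lt_of_le_of_ne (hnn x.1 c) (fun h => x.2 ((hzero x.1 c).1 h.symm))
  refine ⟨by nlinarith, ?_, ?_, ?_, ?_⟩
  · intro x y
    exact div_nonneg (hnn _ _) (mul_nonneg (hpos x).le (hpos y).le)
  · intro x y
    simp only [flat]
    rw [hsym x.1 y.1, mul_comm]
  · intro x y
    have hx := hpos x
    have hy := hpos y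
    simp only [flat]
    rw [div_eq_zero_iff]
    constructor
    · rintro (h | h)
      · exact Subtype.ext ((hzero _ _).1 h)
      · exact absurd h (by positivity)
    · rintro rfl
      exact Or.inl ((hzero _ _).2 rfl)
  · intro x y z
    have hx := hpos x
    have hy := hpos y
    have hz := hpos z
    have h1 := htri x.1 y.1 z.1
    have h2 : ρ x.1 z.1 ≤ K * max (ρ x.1 c) (ρ z.1 c) := by
      have := htri x.1 c z.1; rwa [hsym c z.1] at this
    have h3 : ρ y.1 c ≤ K * max (ρ x.1 y.1) (ρ x.1 c) := by
      have := htri y.1 x.1 c; rwa [hsym y.1 x.1] at this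
    have h4 := htri y.1 z.1 c
    have key' := key hK (hnn x.1 y.1) (hnn y.1 z.1) hx.le hz.le (hnn x.1 z.1)
      (hnn y.1 c) h1 h2 h3 h4
    simp only [flat]
    rcases le_total (ρ y.1 z.1 * ρ x.1 c) (ρ x.1 y.1 * ρ z.1 c) with h | h
    · rw [max_eq_left h] at key'
      rw [max_eq_left (by rw [div_le_div_iff₀ (by positivity) (by positivity)]; nlinarith),
        ← mul_div_assoc, div_le_div_iff₀ (by positivity) (by positivity)]
      nlinarith [mul_le_mul_of_nonneg_right key' hx.le]
    · rw [max_eq_right h] at key'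
      rw [max_eq_right (by rw [div_le_div_iff₀ (by positivity) (by positivity)]; nlinarith),
        ← mul_div_assoc, div_le_div_iff₀ (by positivity) (by positivity)]
      nlinarith [mul_le_mul_of_nonneg_right key' hz.le]

end SphFlat
end

section
/- Let (Z,ρ) be a bounded quasimetric space with c ∈ Z and diam_ρ(Z) = T. Let ρ^c be the flattening of ρ with respect to c on Z^c = Z \ {c}, extended by ρ^c(x,∞) = 1/ρ(x,c) to the one-point extension of Z^c, and let (ρ^c)_∞ be the sphericalization of ρ^c with respect to the point ∞. Then for all x,y ∈ Z^c one has (ρ^c)_∞(x,y) = ρ(x,y)/((1+ρ(x,c))(1+ρ(y,c))), and the identity map (Z^c, ρ) → (Z^c, (ρ^c)_∞) is (1+T)²-bilipschitz, i.e. ρ(x,y)/(1+T)² ≤ (ρ^c)_∞(x,y) ≤ ρ(x,y) for all x,y ∈ Z^c. -/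
open Set MeasureTheory
open scoped ENNReal NNReal

universe u

namespace SphFlat

/-- The sphericalization (with respect to the added point `∞`, where `ρ^c(x,∞) = 1/ρ(x,c)`)
of the flattening `ρ^c`, evaluated at two points of `X \ {c}`. -/
noncomputable def spherFlat {X : Type*} (ρ : X → X → ℝ) (c : X) (x y : X) : ℝ :=
  (ρ x y / (ρ x c * ρ y c)) / ((1 + 1 / ρ x c) * (1 + 1 / ρ y c))

namespace IsQuasiMetric

variable {X : Type*} {K : ℝ} {ρ : X → X → ℝ}

theorem nonneg (hρ : IsQuasiMetric K ρ) (x y : X) : 0 ≤ ρ x y := hρ.2.1 x y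

theorem pos_of_ne (hρ : IsQuasiMetric K ρ) {x y : X} (hxy : x ≠ y) : 0 < ρ x y :=
  (hρ.nonneg x y).lt_of_ne fun h => hxy ((hρ.2.2.2.1 x y).1 h.symm)

end IsQuasiMetric

section Sphericalization

variable {X : Type*} {ρ : X → X → ℝ}

/-- Since `(1 + 1 / ρ(x,c)) ρ(x,c) = 1 + ρ(x,c)`, the denominators of the flattening cancel
against those of its sphericalization: `(ρ^c)_∞` is the sphericalization `ρ_c` on `X \ {c}`. -/
theorem spherFlat_eq_spher {c x y : X} (hx : ρ x c ≠ 0) (hy : ρ y c ≠ 0) :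
    spherFlat ρ c x y = spher ρ c (some x) (some y) := by
  unfold spherFlat spher
  field_simp
  ring

theorem spher_some_le (hρ : ∀ x y, 0 ≤ ρ x y) (a x y : X) :
    spher ρ a (some x) (some y) ≤ ρ x y :=
  div_le_self (hρ x y) (one_le_mul_of_one_le_of_one_le
    (le_add_of_nonneg_right (hρ x a)) (le_add_of_nonneg_right (hρ y a)))

theorem div_sq_le_spher_some {T : ℝ} (hρ : ∀ x y, 0 ≤ ρ x y) (hT : ∀ x y, ρ x y ≤ T)
    (a x y : X) : ρ x y / (1 + T) ^ 2 ≤ spher ρ a (some x) (some y) := by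
  have hxa := hρ x a
  have hya := hρ y a
  have hxT := hT x a
  have hyT := hT y a
  refine div_le_div_of_nonneg_left (hρ x y) (by positivity) ?_
  rw [sq]
  exact mul_le_mul (by linarith) (by linarith) (by linarith) (by linarith)

end Sphericalization

/-- Lemma 3.3: for a bounded quasimetric space `(Z,ρ)` with `diam Z = T` and
`c ∈ Z`, one has `(ρ^c)_∞(x,y) = ρ(x,y)/((1+ρ(x,c))(1+ρ(y,c)))`, and the identity map
`(Z^c,ρ) → (Z^c,(ρ^c)_∞)` is `(1+T)²`-bilipschitz. -/
theorem statement_5 {X : Type*} (K T : ℝ) (ρ : X → X → ℝ) (hρ : IsQuasiMetric K ρ) (c : X)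
    (hT : IsLUB {t : ℝ | ∃ x y : X, t = ρ x y} T) :
    ∀ x y : X, x ≠ c → y ≠ c →
      spherFlat ρ c x y = ρ x y / ((1 + ρ x c) * (1 + ρ y c)) ∧
      ρ x y / (1 + T) ^ 2 ≤ spherFlat ρ c x y ∧ spherFlat ρ c x y ≤ ρ x y := by
  intro x y hx hy
  have hspher : spherFlat ρ c x y = spher ρ c (some x) (some y) :=
    spherFlat_eq_spher (hρ.pos_of_ne hx).ne' (hρ.pos_of_ne hy).ne'
  rw [hspher]
  exact ⟨rfl, div_sq_le_spher_some hρ.nonneg (fun x y => hT.1 ⟨x, y, rfl⟩) c x y,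
    spher_some_le hρ.nonneg c x y⟩

end SphFlat
end

section
/- Let (Z,ρ) be a τ-uniformly perfect K-quasimetric space carrying a doubling measure μ with doubling constant C > 1, let ε > 0, and define β(x,y) = μ(B(x,ρ(x,y)) ∪ B(y,ρ(x,y)))^ε for x ≠ y and β(x,x) = 0. Then β is a K₀-quasimetric on Z with K₀ = C^{(2log₂K+2)ε}: β is symmetric, vanishes exactly on the diagonal, and β(x,y) ≤ K₀·max(β(x,z), β(z,y)) for all x,y,z ∈ Z. -/
open Set MeasureTheory
open scoped ENNReal NNReal

universe u

namespace SphFlat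

open Classical

/-- The David–Semmes deformation `β(x,y) = μ(B(x,ρ(x,y)) ∪ B(y,ρ(x,y)))^ε`. -/
noncomputable def dsBeta {X : Type*} [MeasurableSpace X] (ρ : X → X → ℝ) (μ : Measure X)
    (ε : ℝ) (x y : X) : ℝ :=
  if x = y then 0 else (μ (qball ρ x (ρ x y) ∪ qball ρ y (ρ x y))).toReal ^ ε

/-- Lemma 4.6: the David–Semmes deformation `β` of a `τ`-uniformly perfect
`K`-quasimetric space carrying a `C`-doubling measure is a `K₀`-quasimetric with
`K₀ = C^{(2 log₂ K + 2) ε}`. -/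
theorem statement_14 {X : Type*} [MeasurableSpace X] (K τ C ε : ℝ) (hC : 1 < C) (hε : 0 < ε)
    (ρ : X → X → ℝ) (hρ : IsQuasiMetric K ρ)
    (hτ : τ ∈ Set.Ioo (0 : ℝ) 1) (hup : UniformlyPerfectWith ρ τ)
    (μ : Measure X) (hμ : QDoublingMeasure ρ μ C) :
    IsQuasiMetric (C ^ ((2 * Real.logb 2 K + 2) * ε)) (dsBeta ρ μ ε) := by
  obtain ⟨hK, hnn, hsy, hzero, htri⟩ := hρ
  have hC0 : (0:ℝ) < C := lt_trans one_pos hC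
  have hlogb : 0 ≤ Real.logb 2 K := Real.logb_nonneg one_lt_two hK
  set K₀ : ℝ := C ^ ((2 * Real.logb 2 K + 2) * ε) with hK₀def
  have hK₀ : 1 ≤ K₀ := by
    rw [hK₀def]
    calc (1:ℝ) = C ^ (0:ℝ) := (Real.rpow_zero C).symm
    _ ≤ C ^ ((2 * Real.logb 2 K + 2) * ε) := by
        apply Real.rpow_le_rpow_of_exponent_le hC.le
        positivity
  -- positivity of ρ off the diagonal
  have hpos : ∀ a b : X, a ≠ b → 0 < ρ a b := by
    intro a b h
    rcases lt_or_eq_of_le (hnn a b) with h' | h'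
    · exact h'
    · exact absurd ((hzero a b).mp h'.symm) h
  -- monotonicity of balls
  have hmono : ∀ (x : X) (r s : ℝ), r ≤ s → qball ρ x r ⊆ qball ρ x s :=
    fun x r s h w hw => lt_of_lt_of_le hw h
  -- finiteness of measure of balls
  have hfin : ∀ (x : X) (r : ℝ), 0 < r → μ (qball ρ x r) < ⊤ := by
    intro x r hr
    have := (hμ x (r/2) (by positivity)).2.1
    rwa [show 2 * (r/2) = r by ring] at this
  -- iterated doubling
  have hiter : ∀ (x : X) (n : ℕ) (r : ℝ), 0 < r →
      μ (qball ρ x (2 ^ n * r)) ≤ (ENNReal.ofReal C) ^ n * μ (qball ρ x r) := by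
    intro x n
    induction n with
    | zero => intro r hr; simp
    | succ n ih =>
        intro r hr
        have h2 : (2:ℝ) ^ (n+1) * r = 2 * (2 ^ n * r) := by ring
        rw [h2]
        calc μ (qball ρ x (2 * (2 ^ n * r)))
            ≤ ENNReal.ofReal C * μ (qball ρ x (2 ^ n * r)) :=
              (hμ x (2 ^ n * r) (by positivity)).2.2
          _ ≤ ENNReal.ofReal C * ((ENNReal.ofReal C) ^ n * μ (qball ρ x r)) :=
              mul_le_mul_right (ih r hr) _
          _ = (ENNReal.ofReal C) ^ (n+1) * μ (qball ρ x r) := by ring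
  -- finiteness of the union appearing in dsBeta
  have hUfin : ∀ a b : X, a ≠ b →
      μ (qball ρ a (ρ a b) ∪ qball ρ b (ρ a b)) < ⊤ := by
    intro a b h
    exact lt_of_le_of_lt (measure_union_le _ _)
      (ENNReal.add_lt_top.mpr ⟨hfin a _ (hpos a b h), hfin b _ (hpos a b h)⟩)
  have hUpos : ∀ a b : X, a ≠ b →
      0 < μ (qball ρ a (ρ a b) ∪ qball ρ b (ρ a b)) := by
    intro a b h
    exact lt_of_lt_of_le (hμ a (ρ a b) (hpos a b h)).1 (measure_mono subset_union_left)
  -- symmetry of dsBeta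
  have hβsymm : ∀ a b : X, dsBeta ρ μ ε a b = dsBeta ρ μ ε b a := by
    intro a b
    unfold dsBeta
    by_cases h : a = b
    · simp [h]
    · rw [if_neg h, if_neg (Ne.symm h), hsy a b, union_comm]
  have hβnn : ∀ a b : X, 0 ≤ dsBeta ρ μ ε a b := by
    intro a b
    unfold dsBeta
    by_cases h : a = b
    · simp [h]
    · rw [if_neg h]; exact Real.rpow_nonneg ENNReal.toReal_nonneg _
  -- the core triangle estimate
  have key : ∀ x y z : X, x ≠ z → ρ y z ≤ ρ x y →
      dsBeta ρ μ ε x z ≤ K₀ * dsBeta ρ μ ε x y := by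
    intro x y z hxz hle
    have hxy : x ≠ y := by
      intro h
      have h0 : ρ x y = 0 := (hzero x y).mpr h
      have h1 : ρ y z = 0 := le_antisymm (h0 ▸ hle) (hnn y z)
      exact hxz (h.trans ((hzero y z).mp h1))
    have hm : 0 < ρ x y := hpos x y hxy
    have hr : 0 < ρ x z := hpos x z hxz
    have hrKm : ρ x z ≤ K * ρ x y := by
      have := htri x y z
      rwa [max_eq_left hle] at this
    set n : ℕ := ⌈2 * Real.logb 2 K + 1⌉₊ with hn
    have hKexp : 2 * K ^ 2 ≤ (2:ℝ) ^ n := by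
      have hKp : (0:ℝ) < K := lt_of_lt_of_le one_pos hK
      have hlog : Real.logb 2 (2 * K ^ 2) = 2 * Real.logb 2 K + 1 := by
        rw [Real.logb_mul two_ne_zero (by positivity), Real.logb_self_eq_one one_lt_two, Real.logb_pow]
        ring
      calc 2 * K ^ 2 = (2:ℝ) ^ (Real.logb 2 (2 * K ^ 2)) :=
            (Real.rpow_logb two_pos (by norm_num) (by positivity)).symm
        _ ≤ (2:ℝ) ^ ((n:ℝ)) := by
            apply Real.rpow_le_rpow_of_exponent_le one_le_two
            rw [hlog]; exact Nat.le_ceil _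
        _ = (2:ℝ) ^ n := Real.rpow_natCast 2 n
    -- geometric inclusion
    have hsub : qball ρ x (ρ x z) ∪ qball ρ z (ρ x z) ⊆ qball ρ x (2 ^ n * ρ x y) := by
      have hsub1 : qball ρ x (ρ x z) ∪ qball ρ z (ρ x z) ⊆ qball ρ x (2 * K ^ 2 * ρ x y) := by
        intro w hw
        rcases hw with hw | hw
        · have hw' : ρ x w < ρ x z := hw
          show ρ x w < 2 * K ^ 2 * ρ x y
          nlinarith [hK, hm, hrKm]
        · have hw' : ρ z w < ρ x z := hw
          have h1 := htri x z w
          rw [max_eq_left hw'.le] at h1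
          show ρ x w < 2 * K ^ 2 * ρ x y
          nlinarith [hK, hm, hrKm, mul_le_mul_of_nonneg_left hrKm
            (le_of_lt (lt_of_lt_of_le one_pos hK))]
      exact hsub1.trans (hmono x _ _ (mul_le_mul_of_nonneg_right hKexp hm.le))
    have hμle : μ (qball ρ x (ρ x z) ∪ qball ρ z (ρ x z)) ≤
        (ENNReal.ofReal C) ^ n * μ (qball ρ x (ρ x y) ∪ qball ρ y (ρ x y)) := by
      calc μ (qball ρ x (ρ x z) ∪ qball ρ z (ρ x z))
          ≤ μ (qball ρ x (2 ^ n * ρ x y)) := measure_mono hsub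
        _ ≤ (ENNReal.ofReal C) ^ n * μ (qball ρ x (ρ x y)) := hiter x n _ hm
        _ ≤ (ENNReal.ofReal C) ^ n * μ (qball ρ x (ρ x y) ∪ qball ρ y (ρ x y)) :=
            mul_le_mul_right (measure_mono subset_union_left) _
    have hRfin : (ENNReal.ofReal C) ^ n * μ (qball ρ x (ρ x y) ∪ qball ρ y (ρ x y)) ≠ ⊤ :=
      ENNReal.mul_ne_top (ENNReal.pow_ne_top ENNReal.ofReal_ne_top) (hUfin x y hxy).ne
    have h1 : (μ (qball ρ x (ρ x z) ∪ qball ρ z (ρ x z))).toReal ≤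
        C ^ n * (μ (qball ρ x (ρ x y) ∪ qball ρ y (ρ x y))).toReal := by
      have h2 := (ENNReal.toReal_le_toReal (ne_of_lt (lt_of_le_of_lt hμle
        (lt_of_le_of_ne le_top hRfin))) hRfin).mpr hμle
      rwa [ENNReal.toReal_mul, ENNReal.toReal_pow, ENNReal.toReal_ofReal hC0.le] at h2
    have hCn : ((C ^ n : ℝ)) ^ ε ≤ K₀ := by
      have hnatle : (n:ℝ) ≤ 2 * Real.logb 2 K + 2 := by
        have := Nat.ceil_lt_add_one (show (0:ℝ) ≤ 2 * Real.logb 2 K + 1 by linarith)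
        rw [hn]; push_cast at this ⊢; linarith
      calc ((C ^ n : ℝ)) ^ ε = C ^ ((n:ℝ) * ε) := by
            rw [Real.rpow_mul hC0.le, Real.rpow_natCast]
        _ ≤ C ^ ((2 * Real.logb 2 K + 2) * ε) :=
            Real.rpow_le_rpow_of_exponent_le hC.le
              (mul_le_mul_of_nonneg_right hnatle hε.le)
    calc dsBeta ρ μ ε x z
        = (μ (qball ρ x (ρ x z) ∪ qball ρ z (ρ x z))).toReal ^ ε := by
          unfold dsBeta; rw [if_neg hxz]
      _ ≤ (C ^ n * (μ (qball ρ x (ρ x y) ∪ qball ρ y (ρ x y))).toReal) ^ ε :=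
          Real.rpow_le_rpow ENNReal.toReal_nonneg h1 hε.le
      _ = ((C ^ n : ℝ)) ^ ε * (μ (qball ρ x (ρ x y) ∪ qball ρ y (ρ x y))).toReal ^ ε :=
          Real.mul_rpow (by positivity) ENNReal.toReal_nonneg
      _ ≤ K₀ * (μ (qball ρ x (ρ x y) ∪ qball ρ y (ρ x y))).toReal ^ ε :=
          mul_le_mul_of_nonneg_right hCn (Real.rpow_nonneg ENNReal.toReal_nonneg _)
      _ = K₀ * dsBeta ρ μ ε x y := by unfold dsBeta; rw [if_neg hxy]
  refine ⟨hK₀, hβnn, hβsymm, ?_, ?_⟩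
  · intro x y
    constructor
    · intro h
      by_contra hxy
      have hU := hUpos x y hxy
      have hUf := hUfin x y hxy
      unfold dsBeta at h
      rw [if_neg hxy] at h
      have ht : (μ (qball ρ x (ρ x y) ∪ qball ρ y (ρ x y))).toReal = 0 := by
        by_contra ht
        have : (0:ℝ) < (μ (qball ρ x (ρ x y) ∪ qball ρ y (ρ x y))).toReal :=
          lt_of_le_of_ne ENNReal.toReal_nonneg (Ne.symm ht)
        exact absurd h (ne_of_gt (Real.rpow_pos_of_pos this ε))
      have : μ (qball ρ x (ρ x y) ∪ qball ρ y (ρ x y)) = 0 :=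
        (ENNReal.toReal_eq_zero_iff _).mp ht |>.resolve_right hUf.ne
      exact absurd this (ne_of_gt hU)
    · intro h; unfold dsBeta; rw [if_pos h]
  · intro x y z
    by_cases hxz : x = z
    · have : dsBeta ρ μ ε x z = 0 := by unfold dsBeta; rw [if_pos hxz]
      rw [this]
      exact mul_nonneg (le_trans zero_le_one hK₀)
        (le_max_of_le_left (hβnn x y))
    · rcases le_total (ρ y z) (ρ x y) with hle | hle
      · exact (key x y z hxz hle).trans
          (mul_le_mul_of_nonneg_left (le_max_left _ _) (le_trans zero_le_one hK₀))
      · have h2 : ρ y x ≤ ρ z y := by rw [hsy y x, hsy z y]; exact hle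
        have := key z y x (Ne.symm hxz) h2
        rw [hβsymm z x, hβsymm z y] at this
        exact this.trans
          (mul_le_mul_of_nonneg_left (le_max_right _ _) (le_trans zero_le_one hK₀))

end SphFlat
end
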